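/- Let d > 1 be an integer. Then the sequence of functions λ ↦ d^{-n}·log max{1, |f_λ^n(λ)|} converges locally uniformly on ℂ to a continuous function g_{H∞} : ℂ → ℝ with g_{H∞} ≥ 0 and {λ ∈ ℂ : g_{H∞}(λ) = 0} = C_d, where C_d := {λ ∈ ℂ : sup_n |f_λ^n(λ)| < ∞} is the connectedness locus of the unicritical family. -/

import Mathlib

open Polynomial MeasureTheory Filter

/-- The `n`-th iterate of the unicritical polynomial `f_λ(z) = z^d + λ` (as a polynomial in `z`). -/
noncomputable def uniIter (d : ℕ) (lam : ℂ) : ℕ → Polynomial ℂ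
  | 0 => Polynomial.X
  | n + 1 => (Polynomial.X ^ d + Polynomial.C lam).comp (uniIter d lam n)

/-!
Write `z_n(λ) = f_λ^n(λ)` and `G_n(λ) = log⁺ |z_n(λ)| / d^n`. Since `z_{n+1} = z_n^d + λ`,
`|log⁺ |z_{n+1}| - d log⁺ |z_n|| ≤ log (1 + |λ|)`, so `|G_{n+1} - G_n| ≤ log (1 + |λ|) / d^{n+1}`:
the `G_n` converge geometrically fast, locally uniformly since `log (1 + |λ|)` is continuous, and
the limit `g` satisfies `|G_n - g| ≤ log (1 + |λ|) / ((d - 1) d^n)`. If the orbit is bounded then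
`G_n → 0`. If it is not, pick `m` with `|z_m| > 1 + |λ|`; then `G_m` exceeds the error bound at `m`,
so `g > 0`.
-/

open Topology Real

theorem exists_tendstoLocallyUniformly_of_dist_le_geometric {X Y : Type*} [TopologicalSpace X]
    [PseudoMetricSpace Y] [CompleteSpace Y] {f : ℕ → X → Y} {C : X → ℝ} (hC : Continuous C)
    {r : ℝ} (hr₀ : 0 ≤ r) (hr : r < 1) (hf : ∀ n x, dist (f n x) (f (n + 1) x) ≤ C x * r ^ n) :
    ∃ g : X → Y, TendstoLocallyUniformly f g atTop ∧
      ∀ n x, dist (f n x) (g x) ≤ C x * r ^ n / (1 - r) := by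
  choose g hg using fun x =>
    cauchySeq_tendsto_of_complete (cauchySeq_of_le_geometric r (C x) hr (hf · x))
  have hdist : ∀ n x, dist (f n x) (g x) ≤ C x * r ^ n / (1 - r) := fun n x =>
    dist_le_of_le_geometric_of_tendsto r (C x) hr (hf · x) (hg x) n
  refine ⟨g, ?_, hdist⟩
  rw [Metric.tendstoLocallyUniformly_iff]
  intro ε hε x
  refine ⟨{y | C y < C x + 1}, (isOpen_lt hC continuous_const).mem_nhds (lt_add_one (C x)), ?_⟩
  have hsmall : Tendsto (fun n => (C x + 1) * r ^ n / (1 - r)) atTop (𝓝 0) := by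
    simpa using ((tendsto_pow_atTop_nhds_zero_of_lt_one hr₀ hr).const_mul (C x + 1)).div_const
      (1 - r)
  filter_upwards [hsmall.eventually (gt_mem_nhds hε)] with n hn y hy
  calc dist (g y) (f n y) ≤ C y * r ^ n / (1 - r) := dist_comm (f n y) (g y) ▸ hdist n y
    _ ≤ (C x + 1) * r ^ n / (1 - r) := by gcongr
    _ < ε := hn

theorem posLog_le_posLog_add_log_one_add {a b c : ℝ} (ha : 0 ≤ a) (hb : 0 ≤ b) (hc : 0 ≤ c)
    (h : a ≤ b + c) : log⁺ a ≤ log⁺ b + log (1 + c) := by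
  rw [posLog_eq_log_max_one ha, posLog_eq_log_max_one hb,
    ← log_mul (by positivity) (by positivity)]
  exact log_le_log (by positivity) (max_le (by nlinarith [le_max_left 1 b])
    (by nlinarith [le_max_left 1 b, le_max_right 1 b]))

theorem abs_posLog_norm_add_sub_posLog_norm_le {E : Type*} [SeminormedAddCommGroup E] (u c : E) :
    |log⁺ ‖u + c‖ - log⁺ ‖u‖| ≤ log (1 + ‖c‖) := by
  have hu : ‖u‖ ≤ ‖u + c‖ + ‖c‖ := by simpa using norm_sub_le (u + c) c
  rw [abs_sub_le_iff]
  constructor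
  · linarith [posLog_le_posLog_add_log_one_add (norm_nonneg _) (norm_nonneg u) (norm_nonneg c)
      (norm_add_le u c)]
  · linarith [posLog_le_posLog_add_log_one_add (norm_nonneg u) (norm_nonneg (u + c))
      (norm_nonneg c) hu]

theorem uniIter_succ_eval (d : ℕ) (lam : ℂ) (n : ℕ) (z : ℂ) :
    (uniIter d lam (n + 1)).eval z = (uniIter d lam n).eval z ^ d + lam := by
  simp [uniIter]

theorem continuous_uniIter_eval_self (d n : ℕ) :
    Continuous fun lam : ℂ => (uniIter d lam n).eval lam := by
  induction n with
  | zero => simpa [uniIter] using continuous_id'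
  | succ n ih =>
    simp only [uniIter_succ_eval]
    exact (ih.pow d).add continuous_id

noncomputable def greenApprox (d n : ℕ) (lam : ℂ) : ℝ :=
  log⁺ ‖(uniIter d lam n).eval lam‖ / (d : ℝ) ^ n

theorem continuous_greenApprox (d n : ℕ) : Continuous (greenApprox d n) :=
  (continuous_posLog.comp (continuous_uniIter_eval_self d n).norm).div_const _

theorem greenApprox_nonneg (d n : ℕ) (lam : ℂ) : 0 ≤ greenApprox d n lam :=
  div_nonneg posLog_nonneg (by positivity)

section greenApprox

variable {d : ℕ}

theorem dist_greenApprox_succ_le (hd : 0 < d) (n : ℕ) (lam : ℂ) :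
    dist (greenApprox d n lam) (greenApprox d (n + 1) lam) ≤
      log (1 + ‖lam‖) / d * (1 / d) ^ n := by
  set z := (uniIter d lam n).eval lam
  have hd' : (0 : ℝ) < d := Nat.cast_pos.2 hd
  have hstep : greenApprox d (n + 1) lam - greenApprox d n lam =
      (log⁺ ‖z ^ d + lam‖ - log⁺ ‖z ^ d‖) / (d : ℝ) ^ (n + 1) := by
    simp only [greenApprox, uniIter_succ_eval, norm_pow, posLog_pow, z]
    field_simp
    ring
  rw [dist_comm, Real.dist_eq, hstep, abs_div, abs_of_pos (pow_pos hd' (n + 1))]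
  calc _ ≤ log (1 + ‖lam‖) / (d : ℝ) ^ (n + 1) :=
        div_le_div_of_nonneg_right (abs_posLog_norm_add_sub_posLog_norm_le _ _) (pow_pos hd' _).le
    _ = log (1 + ‖lam‖) / d * (1 / d) ^ n := by rw [one_div_pow, pow_succ]; field_simp

theorem tendsto_greenApprox_zero_of_bounded (hd : 1 < d) {lam : ℂ} {M : ℝ}
    (hM : ∀ n, ‖(uniIter d lam n).eval lam‖ ≤ M) :
    Tendsto (fun n => greenApprox d n lam) atTop (𝓝 0) := by
  have hd' : (1 : ℝ) < d := Nat.one_lt_cast.2 hd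
  have hbound : ∀ n, greenApprox d n lam ≤ log⁺ M * (1 / d) ^ n := fun n => by
    rw [one_div_pow, mul_one_div]
    exact div_le_div_of_nonneg_right (posLog_le_posLog (norm_nonneg _) (hM n)) (by positivity)
  have hgeom := (tendsto_pow_atTop_nhds_zero_of_lt_one (by positivity)
    ((div_lt_one (by positivity)).2 hd')).const_mul (log⁺ M)
  rw [mul_zero] at hgeom
  exact squeeze_zero (greenApprox_nonneg d · lam) hbound hgeom

theorem pos_of_dist_greenApprox_le (hd : 1 < d) {lam : ℂ} {m : ℕ} {L : ℝ}
    (hm : 1 + ‖lam‖ < ‖(uniIter d lam m).eval lam‖)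
    (hL : dist (greenApprox d m lam) L ≤ log (1 + ‖lam‖) / d * (1 / d) ^ m / (1 - 1 / d)) :
    0 < L := by
  have hd' : (1 : ℝ) < d := Nat.one_lt_cast.2 hd
  have hlog₀ : 0 ≤ log (1 + ‖lam‖) := log_nonneg (by linarith [norm_nonneg lam])
  have herr : log (1 + ‖lam‖) / d * (1 / d) ^ m / (1 - 1 / d) ≤ log (1 + ‖lam‖) / (d : ℝ) ^ m := by
    have hd₂ : (2 : ℝ) ≤ d := by exact_mod_cast hd
    rw [show log (1 + ‖lam‖) / d * (1 / d) ^ m / (1 - 1 / d) =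
        log (1 + ‖lam‖) / (d : ℝ) ^ m / (d - 1) by rw [one_div_pow]; field_simp]
    exact div_le_self (by positivity) (by linarith)
  have hGm : log (1 + ‖lam‖) / (d : ℝ) ^ m < greenApprox d m lam := by
    rw [greenApprox, posLog_eq_log (by rw [abs_norm]; linarith [norm_nonneg lam])]
    exact div_lt_div_of_pos_right (log_lt_log (by positivity) hm) (by positivity)
  linarith [(abs_sub_le_iff.1 (Real.dist_eq _ L ▸ hL)).1]

end greenApprox

theorem stmt17 (d : ℕ) (hd : 1 < d) :
    ∃ g : ℂ → ℝ,
      TendstoLocallyUniformly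
        (fun (n : ℕ) (lam : ℂ) =>
          Real.log (max 1 ‖(uniIter d lam n).eval lam‖) / (d : ℝ) ^ n)
        g atTop ∧
      Continuous g ∧
      (∀ lam : ℂ, 0 ≤ g lam) ∧
      {lam : ℂ | g lam = 0} =
        {lam : ℂ | ∃ M : ℝ, ∀ n : ℕ, ‖(uniIter d lam n).eval lam‖ ≤ M} := by
  have hd' : (1 : ℝ) < d := Nat.one_lt_cast.2 hd
  obtain ⟨g, hg, hdist⟩ := exists_tendstoLocallyUniformly_of_dist_le_geometric
    (f := fun n => greenApprox d n) (C := fun lam => log (1 + ‖lam‖) / d)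
    (((continuous_const.add continuous_norm).log fun lam => (by positivity : (0 : ℝ) < 1 + ‖lam‖).ne').div_const (d : ℝ))
    (by positivity) ((div_lt_one (by positivity)).2 hd')
    (fun n lam => dist_greenApprox_succ_le (by omega) n lam)
  have hlim (lam : ℂ) : Tendsto (fun n => greenApprox d n lam) atTop (𝓝 (g lam)) :=
    hg.tendstoLocallyUniformlyOn.tendsto_at (Set.mem_univ lam)
  have happrox : (fun (n : ℕ) (lam : ℂ) =>
      Real.log (max 1 ‖(uniIter d lam n).eval lam‖) / (d : ℝ) ^ n) = fun n => greenApprox d n := by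
    funext n lam
    rw [greenApprox, posLog_eq_log_max_one (norm_nonneg _)]
  refine ⟨g, happrox ▸ hg, hg.continuous (.of_forall (continuous_greenApprox d)),
    fun lam => ge_of_tendsto' (hlim lam) fun n => greenApprox_nonneg d n lam, ?_⟩
  ext lam
  refine ⟨fun hzero => ?_, fun ⟨M, hM⟩ =>
    tendsto_nhds_unique (hlim lam) (tendsto_greenApprox_zero_of_bounded hd hM)⟩
  by_contra hbdd
  obtain ⟨m, hm⟩ : ∃ m, 1 + ‖lam‖ < ‖(uniIter d lam m).eval lam‖ := by
    by_contra! hle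
    exact hbdd ⟨_, hle⟩
  exact (pos_of_dist_greenApprox_le hd hm (hdist m lam)).ne' hzero
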